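/- arXiv:2103.07608 — 4 statements merged into one kernel-verified Lean document; each statement's English description precedes it below -/
import Mathlib

section
/- Let f be a probability density function on ℝ^d with zero mean (∫_{ℝ^d} x·f(x) dx = 0) and positive definite covariance matrix S = ∫_{ℝ^d} x·xᵀ·f(x) dx, and suppose x ↦ f(x)·ln f(x) is integrable. If −∫_{ℝ^d} f(x)·ln f(x) dx = (1/2)·ln((2π·e)^d · det S), then f agrees almost everywhere (with respect to Lebesgue measure) with the multivariate normal density with mean 0 and covariance S, namely x ↦ (2π)^{−d/2}·(det S)^{−1/2}·exp(−(1/2)·xᵀ S⁻¹ x). -/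
open MeasureTheory Real Matrix

/-- Pointwise Gibbs inequality: for `0 ≤ a` and `0 < b`,
`a log a - a log b - a + b ≥ 0`, with equality iff `a = b`. -/
lemma gibbs_pointwise {a b : ℝ} (ha : 0 ≤ a) (hb : 0 < b) :
    0 ≤ a * Real.log a - a * Real.log b - a + b ∧
      (a * Real.log a - a * Real.log b - a + b = 0 → a = b) := by
  rcases ha.eq_or_lt with h0 | ha'
  · subst h0
    simp only [zero_mul, sub_zero, zero_sub, neg_zero, zero_add]
    exact ⟨hb.le, fun h => absurd h.symm hb.ne⟩
  · have hba : 0 < b / a := div_pos hb ha'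
    constructor
    · have hlog : Real.log (b / a) ≤ b / a - 1 := Real.log_le_sub_one_of_pos hba
      have : a * Real.log (b / a) ≤ b - a := by
        have := mul_le_mul_of_nonneg_left hlog ha'.le
        calc a * Real.log (b / a) ≤ a * (b / a - 1) := this
          _ = b - a := by field_simp
      rw [Real.log_div hb.ne' ha'.ne'] at this
      nlinarith
    · intro h
      by_contra hab
      have hne1 : b / a ≠ 1 := by
        intro h1
        exact hab ((div_eq_one_iff_eq ha'.ne').mp h1).symm
      have hlog : Real.log (b / a) < b / a - 1 := Real.log_lt_sub_one_of_pos hba hne1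
      have : a * Real.log (b / a) < b - a := by
        have := mul_lt_mul_of_pos_left hlog ha'
        calc a * Real.log (b / a) < a * (b / a - 1) := this
          _ = b - a := by field_simp
      rw [Real.log_div hb.ne' ha'.ne'] at this
      nlinarith

open scoped MatrixOrder in
/-- Existence of a symmetric square root giving a change of variables for the
quadratic form of a positive definite matrix. -/
lemma exists_sqrt_quad (d : ℕ) (S : Matrix (Fin d) (Fin d) ℝ) (hS : S.PosDef) :
    ∃ B : Matrix (Fin d) (Fin d) ℝ, |B.det| = Real.sqrt S.det ∧ B.det ≠ 0 ∧
      ∀ y : Fin d → ℝ, (B *ᵥ y) ⬝ᵥ (S⁻¹ *ᵥ (B *ᵥ y)) = y ⬝ᵥ y := by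
  set B := CFC.sqrt S with hBdef
  have hB2 : B * B = S := by
    exact CFC.sqrt_mul_sqrt_self S hS.posSemidef.nonneg
  have hdetsq : B.det * B.det = S.det := by
    have := congrArg Matrix.det hB2
    rwa [Matrix.det_mul] at this
  have hSdet : 0 < S.det := hS.det_pos
  have hBdet : B.det ≠ 0 := by
    intro h
    rw [h, zero_mul] at hdetsq
    exact hSdet.ne hdetsq
  have habs : |B.det| = Real.sqrt S.det := by
    rw [← hdetsq, Real.sqrt_mul_self_eq_abs]
  have hsym : Bᵀ = B := by
    simpa using (CFC.sqrt_nonneg S).posSemidef.1.eq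
  have hBunit : IsUnit B.det := isUnit_iff_ne_zero.mpr hBdet
  have hid : B * (S⁻¹ * B) = 1 := by
    have h1 : B⁻¹ * B = 1 := Matrix.nonsing_inv_mul B hBunit
    have h2 : B * B⁻¹ = 1 := Matrix.mul_nonsing_inv B hBunit
    rw [← hB2, Matrix.mul_inv_rev, mul_assoc B⁻¹ B⁻¹ B, h1, mul_one, h2]
  refine ⟨B, habs, hBdet, fun y => ?_⟩
  calc (B *ᵥ y) ⬝ᵥ (S⁻¹ *ᵥ (B *ᵥ y))
      = (B *ᵥ y) ⬝ᵥ ((S⁻¹ * B) *ᵥ y) := by rw [Matrix.mulVec_mulVec]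
    _ = ((B *ᵥ y) ᵥ* (S⁻¹ * B)) ⬝ᵥ y := Matrix.dotProduct_mulVec _ _ _
    _ = ((y ᵥ* Bᵀ) ᵥ* (S⁻¹ * B)) ⬝ᵥ y := by rw [Matrix.vecMul_transpose]
    _ = (y ᵥ* (Bᵀ * (S⁻¹ * B))) ⬝ᵥ y := by rw [Matrix.vecMul_vecMul]
    _ = y ⬝ᵥ y := by rw [hsym, hid, Matrix.vecMul_one]

/-- The multivariate Gaussian integral for a positive definite covariance. -/
lemma gauss_integral (d : ℕ) (S : Matrix (Fin d) (Fin d) ℝ) (hS : S.PosDef) :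
    Integrable (fun x : Fin d → ℝ => Real.exp (-(1/2) * (x ⬝ᵥ S⁻¹ *ᵥ x))) ∧
    ∫ x : Fin d → ℝ, Real.exp (-(1/2) * (x ⬝ᵥ S⁻¹ *ᵥ x))
      = Real.sqrt S.det * Real.sqrt (2 * π) ^ d := by
  obtain ⟨B, habs, hBdet, hquad⟩ := exists_sqrt_quad d S hS
  set F : (Fin d → ℝ) → ℝ := fun x => Real.exp (-(1/2) * (x ⬝ᵥ S⁻¹ *ᵥ x)) with hFdef
  have hQcont : Continuous fun x : Fin d → ℝ => x ⬝ᵥ S⁻¹ *ᵥ x := by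
    simp only [dotProduct, mulVec]; fun_prop
  have hFcont : Continuous F := by
    exact Real.continuous_exp.comp (continuous_const.mul hQcont)
  set T : (Fin d → ℝ) →ₗ[ℝ] (Fin d → ℝ) := Matrix.toLin' B with hTdef
  have hTdet : LinearMap.det T = B.det := LinearMap.det_toLin' B
  have hTdet' : LinearMap.det T ≠ 0 := by rw [hTdet]; exact hBdet
  have hTcont : Continuous T := T.continuous_of_finiteDimensional
  have hmap : Measure.map (⇑T) volume = ENNReal.ofReal |B.det⁻¹| • volume := by
    rw [Measure.map_linearMap_addHaar_eq_smul_addHaar volume hTdet', hTdet]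
  have hFT : ∀ y : Fin d → ℝ, F (T y) = ∏ i, Real.exp (-(1/2) * (y i) ^ 2) := by
    intro y
    have : T y = B *ᵥ y := Matrix.toLin'_apply B y
    rw [hFdef]
    simp only [this, hquad y]
    rw [← Real.exp_sum]
    congr 1
    simp only [dotProduct, Finset.mul_sum]
    exact Finset.sum_congr rfl fun i _ => by ring
  have h1d : Integrable (fun x : ℝ => Real.exp (-(1/2) * x ^ 2)) :=
    integrable_exp_neg_mul_sq (by norm_num : (0:ℝ) < 1/2)
  have hprod_int : Integrable (fun y : Fin d → ℝ => ∏ i, Real.exp (-(1/2) * (y i) ^ 2)) :=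
    Integrable.fintype_prod (fun _ => h1d)
  have hFT_int : Integrable (F ∘ T) volume := by
    apply hprod_int.congr
    filter_upwards with y
    exact (hFT y).symm
  have hc0 : (ENNReal.ofReal |B.det⁻¹| : ENNReal) ≠ 0 := by
    simp only [ne_eq, ENNReal.ofReal_eq_zero, not_le, abs_pos]
    exact inv_ne_zero hBdet
  have hctop : (ENNReal.ofReal |B.det⁻¹| : ENNReal) ≠ ⊤ := ENNReal.ofReal_ne_top
  have hFint : Integrable F volume := by
    have h2 : Integrable F (Measure.map (⇑T) volume) :=
      (integrable_map_measure (hFcont.aestronglyMeasurable) hTcont.measurable.aemeasurable).mpr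
        hFT_int
    rw [hmap] at h2
    exact (integrable_smul_measure hc0 hctop).mp h2
  refine ⟨hFint, ?_⟩
  have hI : ∫ x, F x ∂(Measure.map (⇑T) volume) = ∫ y, F (T y) :=
    integral_map hTcont.measurable.aemeasurable hFcont.aestronglyMeasurable
  have hprodI : ∫ y : Fin d → ℝ, F (T y) = Real.sqrt (2 * π) ^ d := by
    calc ∫ y : Fin d → ℝ, F (T y) = ∫ y : Fin d → ℝ, ∏ i, Real.exp (-(1/2) * (y i) ^ 2) := by
          congr 1; funext y; exact hFT y
      _ = (∫ x : ℝ, Real.exp (-(1/2) * x ^ 2)) ^ Fintype.card (Fin d) :=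
          integral_fintype_prod_eq_pow (ι := Fin d) (fun x : ℝ => Real.exp (-(1/2) * x ^ 2))
      _ = Real.sqrt (2 * π) ^ d := by
          rw [Fintype.card_fin]
          congr 1
          rw [show ∫ x : ℝ, Real.exp (-(1/2) * x ^ 2) = ∫ x : ℝ, Real.exp (-(1/2 : ℝ) * x ^ 2)
            from rfl, integral_gaussian (1/2 : ℝ)]
          norm_num
          ring
  rw [hmap, integral_smul_measure] at hI
  rw [ENNReal.toReal_ofReal (abs_nonneg _)] at hI
  rw [hprodI] at hI
  have habs' : |B.det⁻¹| = (Real.sqrt S.det)⁻¹ := by rw [abs_inv, habs]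
  rw [habs'] at hI
  have hsd : (0:ℝ) < Real.sqrt S.det := Real.sqrt_pos.mpr hS.det_pos
  have : ∫ x, F x = Real.sqrt S.det * Real.sqrt (2 * π) ^ d := by
    have := hI
    rw [smul_eq_mul] at this
    field_simp at this ⊢
    linarith [this]
  exact this

/-- **Maximum-entropy property of the Gaussian (equality case).**
If `f` is a probability density on `ℝ^d` with zero mean and positive definite covariance
matrix `S`, `x ↦ f(x)·ln f(x)` is integrable, and the Shannon differential entropy of `f`
equals `(1/2)·ln((2π·e)^d · det S)`, then `f` agrees almost everywhere with the multivariate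
normal density with mean `0` and covariance `S`. -/
theorem shannon_entropy_eq_gaussian_entropy_iff_gaussian
    (d : ℕ) (f : (Fin d → ℝ) → ℝ) (S : Matrix (Fin d) (Fin d) ℝ)
    (hmeas : Measurable f) (hf0 : ∀ x, 0 ≤ f x) (hf1 : ∫ x, f x = 1)
    (hmean : ∀ a : Fin d, ∫ x, x a * f x = 0)
    (hcov_int : ∀ a b : Fin d, Integrable (fun x => x a * x b * f x))
    (hcov : ∀ a b : Fin d, ∫ x, x a * x b * f x = S a b)
    (hS : S.PosDef)
    (hent : Integrable (fun x => f x * Real.log (f x)))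
    (heq : -∫ x, f x * Real.log (f x) = (1 / 2) * Real.log ((2 * π * Real.exp 1) ^ d * S.det)) :
    f =ᵐ[volume] fun x =>
      (2 * π) ^ (-(d : ℝ) / 2) * S.det ^ (-(1 : ℝ) / 2) *
        Real.exp (-(1 / 2) * (x ⬝ᵥ S⁻¹.mulVec x)) := by
  have hdet : (0:ℝ) < S.det := hS.det_pos
  have h2pi : (0:ℝ) < 2 * π := by positivity
  obtain ⟨hFint, hFI⟩ := gauss_integral d S hS
  set Q : (Fin d → ℝ) → ℝ := fun x => x ⬝ᵥ S⁻¹ *ᵥ x with hQdef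
  set C : ℝ := (2 * π) ^ (-(d : ℝ) / 2) * S.det ^ (-(1 : ℝ) / 2) with hCdef
  have hC : 0 < C := mul_pos (Real.rpow_pos_of_pos h2pi _) (Real.rpow_pos_of_pos hdet _)
  set g : (Fin d → ℝ) → ℝ := fun x => C * Real.exp (-(1/2) * Q x) with hgdef
  have hg0 : ∀ x, 0 < g x := fun x => mul_pos hC (Real.exp_pos _)
  have hgint : Integrable g := hFint.const_mul C
  have hgI : ∫ x, g x = 1 := by
    rw [hgdef, integral_const_mul, hFI]
    have e1 : Real.sqrt (2*π) ^ d = (2*π) ^ ((d:ℝ)/2) := by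
      rw [Real.sqrt_eq_rpow, ← Real.rpow_natCast ((2*π) ^ ((1:ℝ)/2)) d,
        ← Real.rpow_mul h2pi.le]
      ring_nf
    have e2 : Real.sqrt S.det = S.det ^ ((1:ℝ)/2) := Real.sqrt_eq_rpow _
    rw [e1, e2, hCdef]
    rw [show (2*π) ^ (-(d:ℝ)/2) * S.det ^ (-(1:ℝ)/2) * (S.det ^ ((1:ℝ)/2) * (2*π) ^ ((d:ℝ)/2))
        = ((2*π) ^ (-(d:ℝ)/2) * (2*π) ^ ((d:ℝ)/2)) * (S.det ^ (-(1:ℝ)/2) * S.det ^ ((1:ℝ)/2))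
        from by ring,
      ← Real.rpow_add h2pi, ← Real.rpow_add hdet]
    norm_num
    rw [show (-(d:ℝ)/2 + (d:ℝ)/2) = 0 from by ring, Real.rpow_zero]
  have hfint : Integrable f := by
    by_contra hcon
    rw [integral_undef hcon] at hf1
    norm_num at hf1
  have hfQ_eq : (fun x : Fin d → ℝ => f x * Q x)
      = fun x => ∑ a, ∑ b, S⁻¹ a b * (x a * x b * f x) := by
    funext x
    simp only [hQdef, dotProduct, mulVec, Finset.mul_sum]
    exact Finset.sum_congr rfl fun a _ => Finset.sum_congr rfl fun b _ => by ring
  have hfQint : Integrable (fun x => f x * Q x) := by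
    rw [hfQ_eq]
    exact integrable_finset_sum _ fun a _ => integrable_finset_sum _ fun b _ =>
      (hcov_int a b).const_mul _
  have hsymm : ∀ a b, S a b = S b a := by
    intro a b
    rw [← hcov a b, ← hcov b a]
    congr 1
    funext x
    ring
  have hinv : S⁻¹ * S = 1 := Matrix.nonsing_inv_mul S (isUnit_iff_ne_zero.mpr hdet.ne')
  have hfQI : ∫ x, f x * Q x = (d : ℝ) := by
    rw [hfQ_eq, integral_finset_sum Finset.univ (fun a _ => integrable_finset_sum Finset.univ
      fun b _ => (hcov_int a b).const_mul (S⁻¹ a b))]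
    have : ∀ a : Fin d, ∫ x : Fin d → ℝ, ∑ b, S⁻¹ a b * (x a * x b * f x)
        = ∑ b, S⁻¹ a b * S a b := by
      intro a
      rw [integral_finset_sum _ (fun b _ => (hcov_int a b).const_mul _)]
      exact Finset.sum_congr rfl fun b _ => by rw [integral_const_mul, hcov a b]
    rw [Finset.sum_congr rfl fun a _ => this a]
    have : ∀ a : Fin d, ∑ b, S⁻¹ a b * S a b = (1 : Matrix (Fin d) (Fin d) ℝ) a a := by
      intro a
      rw [← hinv, Matrix.mul_apply]
      exact Finset.sum_congr rfl fun b _ => by rw [hsymm a b]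
    rw [Finset.sum_congr rfl fun a _ => this a]
    simp [Matrix.one_apply_eq]
  have hlogg : ∀ x, Real.log (g x) = Real.log C - 1/2 * Q x := by
    intro x
    rw [hgdef]
    simp only []
    rw [Real.log_mul hC.ne' (Real.exp_pos _).ne', Real.log_exp]
    ring
  have hflogg_eq : (fun x => f x * Real.log (g x))
      = fun x => Real.log C * f x - 1/2 * (f x * Q x) := by
    funext x
    rw [hlogg x]
    ring
  have hflogg_int : Integrable (fun x => f x * Real.log (g x)) := by
    rw [hflogg_eq]
    exact (hfint.const_mul _).sub (hfQint.const_mul _)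
  have hfloggI : ∫ x, f x * Real.log (g x) = Real.log C - (d:ℝ)/2 := by
    rw [hflogg_eq, integral_sub (hfint.const_mul _) (hfQint.const_mul _),
      integral_const_mul, integral_const_mul, hf1, hfQI]
    ring
  have hlogC : Real.log C = -(d:ℝ)/2 * Real.log (2*π) + (-(1:ℝ)/2) * Real.log S.det := by
    rw [hCdef, Real.log_mul (Real.rpow_pos_of_pos h2pi _).ne' (Real.rpow_pos_of_pos hdet _).ne',
      Real.log_rpow h2pi, Real.log_rpow hdet]
  have hRHS : (1/2 : ℝ) * Real.log ((2 * π * Real.exp 1) ^ d * S.det)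
      = -(Real.log C - (d:ℝ)/2) := by
    have h2pie : (0:ℝ) < 2 * π * Real.exp 1 := by positivity
    rw [Real.log_mul (pow_ne_zero d h2pie.ne') hdet.ne', Real.log_pow,
      Real.log_mul h2pi.ne' (Real.exp_pos 1).ne', Real.log_exp, hlogC]
    ring
  have hff : ∫ x, f x * Real.log (f x) = Real.log C - (d:ℝ)/2 := by
    rw [hRHS] at heq
    linarith
  have hnn : ∀ x, 0 ≤ f x * Real.log (f x) - f x * Real.log (g x) - f x + g x :=
    fun x => (gibbs_pointwise (hf0 x) (hg0 x)).1
  have hhint : Integrable (fun x => f x * Real.log (f x) - f x * Real.log (g x) - f x + g x) :=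
    ((hent.sub hflogg_int).sub hfint).add hgint
  have hI0 : ∫ x, (f x * Real.log (f x) - f x * Real.log (g x) - f x + g x) = 0 := by
    have h1 : Integrable (fun x : Fin d → ℝ => f x * Real.log (f x) - f x * Real.log (g x)) :=
      hent.sub hflogg_int
    have h2 : Integrable (fun x : Fin d → ℝ =>
        f x * Real.log (f x) - f x * Real.log (g x) - f x) := h1.sub hfint
    rw [integral_add h2 hgint, integral_sub h1 hfint, integral_sub hent hflogg_int,
      hff, hfloggI, hf1, hgI]
    ring
  have hae : (fun x => f x * Real.log (f x) - f x * Real.log (g x) - f x + g x)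
      =ᵐ[volume] 0 := (integral_eq_zero_iff_of_nonneg hnn hhint).mp hI0
  filter_upwards [hae] with x hx
  have hfg : f x = g x := (gibbs_pointwise (hf0 x) (hg0 x)).2 hx
  exact hfg
end

section
/- Let α > 1 and let f be a probability density function on ℝ^d with zero mean (∫_{ℝ^d} x·f(x) dx = 0), positive definite covariance matrix S = ∫_{ℝ^d} x·xᵀ·f(x) dx, and ∫_{ℝ^d} f(x)^α dx < ∞. Then the Rényi entropy of order α of f satisfies (1/(1−α))·ln(∫_{ℝ^d} f(x)^α dx) ≤ C_d(α) + (1/2)·ln(det S), where C_d(α) = (d/2)·ln(π·(α(d+2)−d)/(α−1)) + (1/(α−1))·ln((α(d+2)−d)/(2α)) + ln( Γ(α/(α−1)) / Γ((α(d+2)−d)/(2(α−1))) ). -/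
open MeasureTheory Real Matrix

section RenyiAux

open Set

lemma renyi_aux_realBeta {s t : ℝ} (hs : 0 < s) (ht : 0 < t) :
    ∫ x in (0:ℝ)..1, x ^ (s-1) * (1-x) ^ (t-1) =
      Real.Gamma s * Real.Gamma t / Real.Gamma (s+t) := by
  have h := Complex.Gamma_mul_Gamma_eq_betaIntegral (s := (s:ℂ)) (t := (t:ℂ))
    (by simpa using hs) (by simpa using ht)
  have hbeta : Complex.betaIntegral (s:ℂ) (t:ℂ) =
      ((∫ x in (0:ℝ)..1, x ^ (s-1) * (1-x) ^ (t-1) : ℝ) : ℂ) := by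
    rw [Complex.betaIntegral, ← intervalIntegral.integral_ofReal]
    apply intervalIntegral.integral_congr
    intro x hx
    rw [Set.uIcc_of_le (zero_le_one' ℝ)] at hx
    have h0 : (0:ℝ) ≤ x := hx.1
    have h1 : (0:ℝ) ≤ 1 - x := by linarith [hx.2]
    simp only []
    rw [Complex.ofReal_mul, Complex.ofReal_cpow h0, Complex.ofReal_cpow h1]
    push_cast
    ring_nf
  rw [hbeta, ← Complex.ofReal_add, Complex.Gamma_ofReal, Complex.Gamma_ofReal,
    Complex.Gamma_ofReal] at h
  have hst : Real.Gamma (s+t) ≠ 0 := (Real.Gamma_pos_of_pos (by linarith)).ne'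
  have h' : Real.Gamma s * Real.Gamma t =
      Real.Gamma (s+t) * ∫ x in (0:ℝ)..1, x ^ (s-1) * (1-x) ^ (t-1) := by
    exact_mod_cast h
  field_simp [h']
  rw [h']; ring

lemma renyi_aux_radial_int (d : ℕ) (hd : 0 < d) {q : ℝ} (hq : 0 < q) :
    ∫ x in Set.Ioi (0:ℝ), x ^ (d-1) * ((1 - x^2) ⊔ 0) ^ q
      = Real.Gamma ((d:ℝ)/2) * Real.Gamma (q+1) / (2 * Real.Gamma ((d:ℝ)/2 + q + 1)) := by
  set m : ℝ := (d:ℝ)/2 with hm_def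
  have hm : 0 < m := by positivity
  set g : ℝ → ℝ := fun u => ((1-u) ⊔ 0) ^ q * u ^ (m-1) with hg_def
  have hrpow : IntervalIntegrable (fun u : ℝ => u ^ (m-1)) volume 0 1 :=
    intervalIntegral.intervalIntegrable_rpow' (by linarith)
  have hIoc : IntegrableOn g (Set.Ioc (0:ℝ) 1) := by
    refine Integrable.bdd_mul (c := 1) hrpow.1 ?_ ?_
    · refine Continuous.aestronglyMeasurable ?_
      exact (continuous_const.sub continuous_id).max continuous_const |>.rpow_const
        (fun x => Or.inr hq.le)
    · filter_upwards [ae_restrict_mem measurableSet_Ioc] with u hu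
      rw [Real.norm_eq_abs, abs_of_nonneg (Real.rpow_nonneg (le_max_right _ _) _)]
      refine Real.rpow_le_one (le_max_right _ _) ?_ hq.le
      rw [sup_le_iff]
      constructor <;> [linarith [hu.1]; norm_num]
  have hEq1 : Set.EqOn g 0 (Set.Ioi (1:ℝ)) := by
    intro u hu
    have : (1 - u) ⊔ 0 = 0 := by
      rw [sup_eq_right]; linarith [mem_Ioi.mp hu]
    simp [hg_def, this, Real.zero_rpow hq.ne']
  have hIoi1 : IntegrableOn g (Set.Ioi (1:ℝ)) :=
    (integrableOn_zero : IntegrableOn (fun _ : ℝ => (0:ℝ)) _ _).congr_fun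
      hEq1.symm measurableSet_Ioi
  have hzero : ∫ u in Set.Ioi (1:ℝ), g u = 0 := by
    rw [setIntegral_congr_fun measurableSet_Ioi hEq1]; simp
  have hbeta : ∫ u in Set.Ioi (0:ℝ), g u =
      Real.Gamma m * Real.Gamma (q+1) / Real.Gamma (m + q + 1) := by
    rw [← Set.Ioc_union_Ioi_eq_Ioi (zero_le_one' ℝ),
      setIntegral_union (Set.Ioc_disjoint_Ioi le_rfl) measurableSet_Ioi hIoc hIoi1, hzero,
      add_zero, ← intervalIntegral.integral_of_le (zero_le_one' ℝ)]
    have : ∫ u in (0:ℝ)..1, g u = ∫ u in (0:ℝ)..1, u ^ (m-1) * (1-u) ^ ((q+1)-1) := by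
      apply intervalIntegral.integral_congr
      intro u hu
      rw [Set.uIcc_of_le (zero_le_one' ℝ)] at hu
      have : (1 - u) ⊔ 0 = 1 - u := by rw [sup_eq_left]; linarith [hu.2]
      simp only [hg_def, this]
      rw [show (q+1)-1 = q by ring]; ring
    rw [this, renyi_aux_realBeta hm (by linarith), show m + (q+1) = m + q + 1 by ring]
  have hsub := integral_comp_rpow_Ioi_of_pos (g := g) (p := (2:ℝ)) two_pos
  have hcongr : ∫ x in Set.Ioi (0:ℝ), (2 * x ^ ((2:ℝ)-1)) • g (x ^ (2:ℝ))
      = ∫ x in Set.Ioi (0:ℝ), 2 * (x ^ (d-1) * ((1 - x^2) ⊔ 0) ^ q) := by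
    apply setIntegral_congr_fun measurableSet_Ioi
    intro x hx
    have hx : (0:ℝ) < x := hx
    have h2 : x ^ (2:ℝ) = x ^ (2:ℕ) := by
      rw [← Real.rpow_natCast x 2]; norm_num
    have hxpow : x ^ ((2:ℝ)-1) * (x ^ (2:ℝ)) ^ (m-1) = x ^ (d-1) := by
      rw [show (2:ℝ)-1 = (1:ℝ) by norm_num, ← Real.rpow_natCast x (d-1),
        ← Real.rpow_mul hx.le, ← Real.rpow_add hx]
      congr 1
      rw [Nat.cast_sub hd]
      push_cast
      simp only [hm_def]
      ring
    simp only [smul_eq_mul, hg_def, h2]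
    calc 2 * x ^ ((2:ℝ)-1) * (((1 - x^(2:ℕ)) ⊔ 0) ^ q * (x^(2:ℕ)) ^ (m-1))
        = 2 * ((x ^ ((2:ℝ)-1) * (x^(2:ℕ)) ^ (m-1)) * ((1 - x^(2:ℕ)) ⊔ 0) ^ q) := by ring
      _ = _ := by rw [← h2, hxpow]
  rw [hcongr] at hsub
  rw [integral_const_mul] at hsub
  rw [hbeta] at hsub
  have : ∫ x in Set.Ioi (0:ℝ), x ^ (d-1) * ((1 - x^2) ⊔ 0) ^ q
      = (Real.Gamma m * Real.Gamma (q+1) / Real.Gamma (m + q + 1)) / 2 := by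
    linarith
  rw [this]
  ring

lemma renyi_aux_model_int (d : ℕ) (hd : 0 < d) {q : ℝ} (hq : 0 < q) :
    ∫ y : Fin d → ℝ, ((1 - ∑ i, y i ^ 2) ⊔ 0) ^ q
      = π ^ ((d:ℝ)/2) * Real.Gamma (q+1) / Real.Gamma (q + 1 + (d:ℝ)/2) := by
  haveI : Nonempty (Fin d) := ⟨⟨0, hd⟩⟩
  have etrans := (EuclideanSpace.volume_preserving_symm_measurableEquiv_toLp (Fin d)).integral_comp
    (MeasurableEquiv.toLp 2 (Fin d → ℝ)).symm.measurableEmbedding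
    (fun y : Fin d → ℝ => ((1 - ∑ i, y i ^ 2) ⊔ 0) ^ q)
  rw [← etrans]
  have hnormsq : ∀ z : EuclideanSpace ℝ (Fin d),
      ∑ i, ((MeasurableEquiv.toLp 2 (Fin d → ℝ)).symm z) i ^ 2 = ‖z‖ ^ 2 := by
    intro z
    rw [EuclideanSpace.norm_eq, Real.sq_sqrt (by positivity)]
    apply Finset.sum_congr rfl
    intro i _
    rw [Real.norm_eq_abs, sq_abs]
    rfl
  simp_rw [hnormsq]
  have key := integral_fun_norm_addHaar (volume : Measure (EuclideanSpace ℝ (Fin d)))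
    (fun r : ℝ => ((1 - r ^ 2) ⊔ 0) ^ q)
  rw [key]
  simp only [finrank_euclideanSpace_fin]
  have hrad : ∫ x in Set.Ioi (0:ℝ), x ^ (d-1) • (((1 - x^2) ⊔ 0) ^ q)
      = Real.Gamma ((d:ℝ)/2) * Real.Gamma (q+1) / (2 * Real.Gamma ((d:ℝ)/2 + q + 1)) := by
    simp_rw [smul_eq_mul]
    exact renyi_aux_radial_int d hd hq
  rw [hrad]
  have hball : ((volume (Metric.ball (0:EuclideanSpace ℝ (Fin d)) 1)).toReal)
      = π ^ ((d:ℝ)/2) / Real.Gamma ((d:ℝ)/2 + 1) := by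
    rw [EuclideanSpace.volume_ball]
    simp only [Fintype.card_fin, ENNReal.ofReal_one, one_pow, one_mul]
    rw [ENNReal.toReal_ofReal (by positivity)]
    congr 1
    rw [Real.sqrt_eq_rpow, ← Real.rpow_natCast (π ^ ((1:ℝ)/2)) d, ← Real.rpow_mul pi_pos.le]
    congr 1
    ring
  rw [measureReal_def, hball]
  have hm : (0:ℝ) < (d:ℝ)/2 := by positivity
  have hΓm : Real.Gamma ((d:ℝ)/2) ≠ 0 := (Real.Gamma_pos_of_pos hm).ne'
  rw [smul_eq_mul, nsmul_eq_mul]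
  rw [show (d:ℝ)/2 + 1 = ((d:ℝ)/2) + 1 by ring, Real.Gamma_add_one hm.ne']
  rw [show (d:ℝ)/2 + q + 1 = q + 1 + (d:ℝ)/2 by ring]
  have hΓ2 : Real.Gamma (q + 1 + (d:ℝ)/2) ≠ 0 :=
    (Real.Gamma_pos_of_pos (by linarith)).ne'
  field_simp

open scoped MatrixOrder in
lemma renyi_aux_barenblatt (d : ℕ) (hd : 0 < d) (S : Matrix (Fin d) (Fin d) ℝ) (hS : S.PosDef)
    {c q : ℝ} (hc : 0 < c) (hq : 0 < q) :
    Integrable (fun x : Fin d → ℝ => ((c - x ⬝ᵥ (S⁻¹).mulVec x) ⊔ 0) ^ q) ∧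
    ∫ x : Fin d → ℝ, ((c - x ⬝ᵥ (S⁻¹).mulVec x) ⊔ 0) ^ q
      = c ^ (q + (d:ℝ)/2) * Real.sqrt S.det
        * (π ^ ((d:ℝ)/2) * Real.Gamma (q+1) / Real.Gamma (q + 1 + (d:ℝ)/2)) := by
  classical
  set F : (Fin d → ℝ) → ℝ := fun x => ((c - x ⬝ᵥ (S⁻¹).mulVec x) ⊔ 0) ^ q with hF_def
  set M0 : Matrix (Fin d) (Fin d) ℝ := CFC.sqrt S with hM0_def
  have hM0sq : M0 * M0 = S := CFC.sqrt_mul_sqrt_self S hS.posSemidef.nonneg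
  have hM0herm : M0ᴴ = M0 := (CFC.sqrt_nonneg S).posSemidef.1
  have hM0T : M0ᵀ = M0 := hM0herm
  have hdetS : 0 < S.det := hS.det_pos
  have hdetM0sq : M0.det * M0.det = S.det := by rw [← Matrix.det_mul, hM0sq]
  have hdetM0 : M0.det ≠ 0 := by
    intro h; rw [h, mul_zero] at hdetM0sq; linarith
  have habs0 : |M0.det| = Real.sqrt S.det := by
    rw [← hdetM0sq, Real.sqrt_mul_self_eq_abs]
  have hu0 : IsUnit M0.det := isUnit_iff_ne_zero.mpr hdetM0
  set M : Matrix (Fin d) (Fin d) ℝ := Real.sqrt c • M0 with hM_def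
  have hdetM : M.det = (Real.sqrt c) ^ d * M0.det := by
    rw [hM_def, Matrix.det_smul, Fintype.card_fin]
  have hsc : (0:ℝ) < Real.sqrt c := Real.sqrt_pos.mpr hc
  have hMne : M.det ≠ 0 := by
    rw [hdetM]; positivity
  have habsM : |M.det| = (Real.sqrt c) ^ d * Real.sqrt S.det := by
    rw [hdetM, abs_mul, abs_of_nonneg (by positivity), habs0]
  have hone : M0 * (S⁻¹ * M0) = 1 := by
    rw [← hM0sq, Matrix.mul_inv_rev, Matrix.mul_assoc, Matrix.nonsing_inv_mul _ hu0,
      Matrix.mul_one, Matrix.mul_nonsing_inv _ hu0]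
  have hquad : ∀ y : Fin d → ℝ, (M.mulVec y) ⬝ᵥ (S⁻¹).mulVec (M.mulVec y)
      = c * ∑ i, y i ^ 2 := by
    intro y
    rw [hM_def, Matrix.smul_mulVec, smul_dotProduct, Matrix.mulVec_smul,
      dotProduct_smul]
    have : (M0.mulVec y) ⬝ᵥ (S⁻¹).mulVec (M0.mulVec y) = ∑ i, y i ^ 2 := by
      nth_rewrite 1 [show M0.mulVec y = y ᵥ* M0 from by
        rw [← Matrix.mulVec_transpose, hM0T]]
      rw [Matrix.mulVec_mulVec, Matrix.dotProduct_mulVec, Matrix.vecMul_vecMul, hone,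
        Matrix.vecMul_one]
      simp [dotProduct, sq]
    rw [this, smul_eq_mul, smul_eq_mul, ← mul_assoc, Real.mul_self_sqrt hc.le]
  have hQcont : Continuous fun x : Fin d → ℝ => x ⬝ᵥ (S⁻¹).mulVec x := by
    show Continuous fun x : Fin d → ℝ => ∑ i, x i * ∑ j, S⁻¹ i j * x j
    exact continuous_finset_sum _ fun i _ => (continuous_apply i).mul
      (continuous_finset_sum _ fun j _ => continuous_const.mul (continuous_apply j))
  have hFcont : Continuous F :=
    ((continuous_const.sub hQcont).max continuous_const).rpow_const fun _ => Or.inr hq.le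
  have hMcont : Continuous fun y : Fin d → ℝ => M.mulVec y := by
    have := LinearMap.continuous_of_finiteDimensional (Matrix.toLin' M)
    exact this
  have hFφ : ∀ y : Fin d → ℝ, F (M.mulVec y) = c ^ q * ((1 - ∑ i, y i ^ 2) ⊔ 0) ^ q := by
    intro y
    rw [hF_def]
    simp only
    rw [hquad y, show c - c * ∑ i, y i ^ 2 = c * (1 - ∑ i, y i ^ 2) by ring]
    conv_lhs => rw [show (0:ℝ) = c * 0 by ring, ← mul_max_of_nonneg _ _ hc.le]
    rw [Real.mul_rpow hc.le (le_max_right _ _)]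
  have hcs : HasCompactSupport F := by
    apply HasCompactSupport.intro (K := (fun y => M.mulVec y) '' Metric.closedBall 0 1)
    · exact (isCompact_closedBall 0 1).image hMcont
    · intro x hx
      set y : Fin d → ℝ := (M⁻¹).mulVec x with hy_def
      have hxy : M.mulVec y = x := by
        rw [hy_def, Matrix.mulVec_mulVec, Matrix.mul_nonsing_inv _ (isUnit_iff_ne_zero.mpr hMne),
          Matrix.one_mulVec]
      have hsum : 1 < ∑ i, y i ^ 2 := by
        by_contra h
        push_neg at h
        apply hx
        refine ⟨y, ?_, hxy⟩
        rw [Metric.mem_closedBall, dist_zero_right]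
        refine (pi_norm_le_iff_of_nonneg zero_le_one).mpr (fun i => ?_)
        rw [Real.norm_eq_abs]
        nlinarith [Finset.single_le_sum (fun j (_ : j ∈ Finset.univ) => sq_nonneg (y j))
          (Finset.mem_univ i), abs_nonneg (y i), sq_abs (y i)]
      have hQx : x ⬝ᵥ (S⁻¹).mulVec x = c * ∑ i, y i ^ 2 := by
        rw [← hxy]; exact hquad y
      have : (c - x ⬝ᵥ (S⁻¹).mulVec x) ⊔ 0 = 0 := by
        rw [sup_eq_right, hQx]
        nlinarith
      rw [hF_def]
      simp only
      rw [this, Real.zero_rpow hq.ne']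
  have hInt : Integrable F := hFcont.integrable_of_hasCompactSupport hcs
  refine ⟨hInt, ?_⟩
  have hmap := Real.map_matrix_volume_pi_eq_smul_volume_pi hMne
  have hφmeas : AEMeasurable (⇑(Matrix.toLin' M)) (volume : Measure (Fin d → ℝ)) :=
    (LinearMap.continuous_of_finiteDimensional _).measurable.aemeasurable
  have h1 : ∫ y, F ((Matrix.toLin' M) y) = |M.det⁻¹| * ∫ x, F x := by
    rw [← integral_map hφmeas hFcont.aestronglyMeasurable, hmap, integral_smul_measure,
      ENNReal.toReal_ofReal (abs_nonneg _), smul_eq_mul]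
  have h2 : ∫ y, F ((Matrix.toLin' M) y) = c ^ q *
      (π ^ ((d:ℝ)/2) * Real.Gamma (q+1) / Real.Gamma (q + 1 + (d:ℝ)/2)) := by
    simp_rw [Matrix.toLin'_apply, hFφ]
    rw [integral_const_mul, renyi_aux_model_int d hd hq]
  have h3 : (|M.det|)⁻¹ * ∫ x, F x = c ^ q *
      (π ^ ((d:ℝ)/2) * Real.Gamma (q+1) / Real.Gamma (q + 1 + (d:ℝ)/2)) := by
    rw [← h2, h1, abs_inv]
  have habsne : |M.det| ≠ 0 := by positivity
  have h4 : ∫ x, F x = |M.det| * (c ^ q *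
      (π ^ ((d:ℝ)/2) * Real.Gamma (q+1) / Real.Gamma (q + 1 + (d:ℝ)/2))) := by
    field_simp at h3 ⊢
    linarith [h3]
  rw [h4, habsM]
  have hpow : (Real.sqrt c) ^ d = c ^ ((d:ℝ)/2) := by
    rw [Real.sqrt_eq_rpow, ← Real.rpow_natCast (c ^ ((1:ℝ)/2)) d, ← Real.rpow_mul hc.le]
    congr 1; ring
  rw [hpow, Real.rpow_add hc]
  ring

lemma renyi_aux_tangent {α : ℝ} (hα : 1 < α) {p : ℝ} (hp : p = (α-1)⁻¹) {t s : ℝ}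
    (ht : 0 ≤ t) (hs : 0 ≤ s) :
    (1-α) * s ^ (p+1) + α * (s * t) ≤ t ^ α := by
  have hα1 : 0 < α - 1 := by linarith
  have hp0 : 0 < p := by rw [hp]; positivity
  rcases eq_or_lt_of_le hs with hs0 | hs0
  · rw [← hs0, Real.zero_rpow (by positivity : (0:ℝ) < p + 1).ne', mul_zero, zero_mul,
      mul_zero, add_zero]
    exact Real.rpow_nonneg ht α
  · set h : ℝ := s ^ p with hh_def
    have hh : 0 < h := Real.rpow_pos_of_pos hs0 p
    have hpα : p * α = p + 1 := by rw [hp]; field_simp; ring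
    have hhα : h ^ α = s ^ (p+1) := by
      rw [hh_def, ← Real.rpow_mul hs, hpα]
    have hhs : h * s = s ^ (p+1) := by
      rw [hh_def, ← Real.rpow_add_one hs0.ne' p]
    have hz : (-1:ℝ) ≤ t / h - 1 := by
      have : 0 ≤ t / h := by positivity
      linarith
    have hB := one_add_mul_self_le_rpow_one_add hz hα.le
    rw [show 1 + (t/h - 1) = t/h by ring] at hB
    calc (1-α) * s ^ (p+1) + α * (s * t)
        = (1 + α * (t/h - 1)) * (h * s) := by
          rw [← hhs]; field_simp; ring
      _ = (1 + α * (t/h - 1)) * h ^ α := by rw [hhα, ← hhs]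
      _ ≤ (t/h) ^ α * h ^ α := by
          apply mul_le_mul_of_nonneg_right hB (Real.rpow_nonneg hh.le α)
      _ = t ^ α := by
          rw [Real.div_rpow ht hh.le, div_mul_cancel₀ _ (Real.rpow_pos_of_pos hh α).ne']

end RenyiAux

/-- **Upper bound for the Rényi entropy of order `α > 1` in terms of the covariance matrix.**
If `f` is a probability density on `ℝ^d` with zero mean, positive definite covariance matrix
`S`, and `∫ f^α < ∞`, then `(1/(1−α))·ln(∫ f^α) ≤ C_d(α) + (1/2)·ln(det S)` where
`C_d(α) = (d/2)·ln(π(α(d+2)−d)/(α−1)) + (1/(α−1))·ln((α(d+2)−d)/(2α))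
          + ln(Γ(α/(α−1)) / Γ((α(d+2)−d)/(2(α−1))))`. -/
theorem renyi_entropy_upper_bound_of_one_lt
    (d : ℕ) (α : ℝ) (hα : 1 < α)
    (f : (Fin d → ℝ) → ℝ) (S : Matrix (Fin d) (Fin d) ℝ)
    (hmeas : Measurable f) (hf0 : ∀ x, 0 ≤ f x) (hf1 : ∫ x, f x = 1)
    (hmean : ∀ a : Fin d, ∫ x, x a * f x = 0)
    (hcov_int : ∀ a b : Fin d, Integrable (fun x => x a * x b * f x))
    (hcov : ∀ a b : Fin d, ∫ x, x a * x b * f x = S a b)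
    (hS : S.PosDef)
    (hfα : Integrable (fun x => f x ^ α)) :
    (1 / (1 - α)) * Real.log (∫ x, f x ^ α) ≤
      ((d : ℝ) / 2) * Real.log (π * (α * ((d : ℝ) + 2) - d) / (α - 1))
        + (1 / (α - 1)) * Real.log ((α * ((d : ℝ) + 2) - d) / (2 * α))
        + Real.log (Real.Gamma (α / (α - 1)) /
            Real.Gamma ((α * ((d : ℝ) + 2) - d) / (2 * (α - 1))))
        + (1 / 2) * Real.log S.det := by
  have hα1 : 0 < α - 1 := by linarith
  have hα0 : 0 < α := by linarith
  rcases Nat.eq_zero_or_pos d with hd0 | hd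
  · -- degenerate case d = 0
    subst hd0
    haveI : Unique (Fin 0 → ℝ) := ⟨⟨fun i => i.elim0⟩, fun a => funext fun i => i.elim0⟩
    have huniv : (volume : Measure (Fin 0 → ℝ)) Set.univ = 1 := by
      rw [show (volume : Measure (Fin 0 → ℝ)) = Measure.pi (fun _ => volume) from rfl,
        Measure.pi_univ]
      simp
    have key : ∀ (g : (Fin 0 → ℝ) → ℝ), ∫ x, g x = g default := by
      intro g
      rw [integral_unique (μ := (volume : Measure (Fin 0 → ℝ))), measureReal_def, huniv]
      simp only [ENNReal.toReal_one, one_smul]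
      exact congrArg g (Subsingleton.elim _ _)
    rw [key f] at hf1
    have hint : ∫ x : Fin 0 → ℝ, f x ^ α = 1 := by
      rw [key (fun x => f x ^ α)]
      simp only [hf1, Real.one_rpow]
    rw [hint, Real.log_one, mul_zero]
    have h2 : (α * ((0:ℕ) + 2) - (0:ℕ)) / (2 * α) = 1 := by
      push_cast; field_simp; ring
    have h3 : (α * ((0:ℕ) + 2) - (0:ℕ)) / (2 * (α - 1)) = α / (α - 1) := by
      push_cast; rw [show α * (0 + 2) - 0 = 2 * α by ring]
      rw [mul_div_mul_left _ _ (two_ne_zero)]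
    have hΓpos : 0 < Real.Gamma (α / (α - 1)) :=
      Real.Gamma_pos_of_pos (by positivity)
    rw [h2, h3, Real.log_one, div_self hΓpos.ne', Real.log_one]
    rw [show ((0:ℕ):ℝ)/2 = 0 by norm_num, Matrix.det_fin_zero, Real.log_one]
    norm_num
  · -- main case d ≥ 1
    set p : ℝ := (α - 1)⁻¹ with hp_def
    have hp0 : 0 < p := by rw [hp_def]; positivity
    set m : ℝ := (d:ℝ)/2 with hm_def
    have hm : 0 < m := by positivity
    have hd2 : (d:ℝ) = 2*m := by rw [hm_def]; ring
    have hdetS : 0 < S.det := hS.det_pos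
    have hsd : 0 < Real.sqrt S.det := Real.sqrt_pos.mpr hdetS
    have hΓ1 : 0 < Real.Gamma (p+1) := Real.Gamma_pos_of_pos (by linarith)
    have hΓ2 : 0 < Real.Gamma (p+1+m) := Real.Gamma_pos_of_pos (by linarith)
    have hΓ1' : 0 < Real.Gamma (p+1+1) := Real.Gamma_pos_of_pos (by linarith)
    have hΓ2' : 0 < Real.Gamma (p+1+1+m) := Real.Gamma_pos_of_pos (by linarith)
    set c₀ : ℝ := 2*(p+1+m) with hc₀_def
    have hc₀ : 0 < c₀ := by rw [hc₀_def]; positivity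
    set E : ℝ := c₀ ^ (p+1+m) * Real.sqrt S.det
      * (π ^ m * Real.Gamma (p+1+1) / Real.Gamma (p+1+1+m)) with hE_def
    have hE : 0 < E := by
      rw [hE_def]
      have h1 : 0 < c₀ ^ (p+1+m) := Real.rpow_pos_of_pos hc₀ _
      have h2 : 0 < π ^ m := Real.rpow_pos_of_pos pi_pos m
      positivity
    set β : ℝ := (2*(p+1) / E) ^ (p⁻¹) with hβ_def
    have hbase : 0 < 2*(p+1)/E := by positivity
    have hβ : 0 < β := Real.rpow_pos_of_pos hbase _
    have hβp : β ^ p = 2*(p+1)/E := by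
      rw [hβ_def, ← Real.rpow_mul hbase.le, inv_mul_cancel₀ hp0.ne', Real.rpow_one]
    -- the Barenblatt profile pieces
    obtain ⟨hBint, hBval⟩ := renyi_aux_barenblatt d hd S hS hc₀ (by positivity : (0:ℝ) < p+1)
    set Q : (Fin d → ℝ) → ℝ := fun x => x ⬝ᵥ (S⁻¹).mulVec x with hQ_def
    set g : (Fin d → ℝ) → ℝ := fun x => β * ((c₀ - Q x) ⊔ 0) with hg_def
    have hg0 : ∀ x, 0 ≤ g x := fun x => mul_nonneg hβ.le (le_max_right _ _)
    have hQ0 : ∀ x, 0 ≤ Q x := by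
      intro x
      have := hS.inv.posSemidef.dotProduct_mulVec_nonneg x
      simpa using this
    have hQcont : Continuous Q := by
      show Continuous fun x : Fin d → ℝ => ∑ i, x i * ∑ j, S⁻¹ i j * x j
      exact continuous_finset_sum _ fun i _ => (continuous_apply i).mul
        (continuous_finset_sum _ fun j _ => continuous_const.mul (continuous_apply j))
    -- integral of g^(p+1)
    have hgp_eq : (fun x => (g x) ^ (p+1))
        = fun x => β ^ (p+1) * (((c₀ - Q x) ⊔ 0) ^ (p+1)) :=
      funext fun x => by rw [hg_def]; exact Real.mul_rpow hβ.le (le_max_right _ _)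
    have hgp_int : Integrable (fun x => (g x) ^ (p+1)) := by
      rw [hgp_eq]; exact hBint.const_mul _
    have hgp_val : ∫ x, (g x) ^ (p+1) = β ^ (p+1) * (c₀ ^ (p+1+m) * Real.sqrt S.det
        * (π ^ ((d:ℝ)/2) * Real.Gamma (p+1+1) / Real.Gamma (p+1+1+(d:ℝ)/2))) := by
      rw [hgp_eq, integral_const_mul, hBval]
    set K : ℝ := 2*(p+1)*β with hK_def
    have hK : 0 < K := by rw [hK_def]; positivity
    have hKval : ∫ x, (g x) ^ (p+1) = K := by
      rw [hgp_val]
      have h1 : β ^ (p+1) = β ^ p * β := by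
        rw [← Real.rpow_add_one hβ.ne' p]
      have hEne : E ≠ 0 := hE.ne'
      rw [h1, hβp]
      rw [hK_def, hE_def]
      simp only [← hm_def]
      field_simp
    -- f is integrable
    have hfi : Integrable f := by
      by_contra h
      rw [integral_undef h] at hf1
      norm_num at hf1
    -- g * f integrable
    have hgf_int : Integrable (fun x => g x * f x) := by
      apply Integrable.bdd_mul (c := β * c₀) hfi
      · exact (continuous_const.mul ((continuous_const.sub hQcont).max
          continuous_const)).aestronglyMeasurable
      · refine ae_of_all _ (fun x => ?_)
        rw [Real.norm_eq_abs, abs_of_nonneg (hg0 x), hg_def]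
        simp only
        apply mul_le_mul_of_nonneg_left _ hβ.le
        rw [sup_le_iff]
        constructor
        · linarith [hQ0 x]
        · exact hc₀.le
    -- moment computation
    have hQ_eq : ∀ x : Fin d → ℝ, Q x = ∑ a, ∑ b, S⁻¹ a b * (x a * x b) := by
      intro x
      show ∑ a, x a * ∑ b, S⁻¹ a b * x b = _
      apply Finset.sum_congr rfl
      intro a _
      rw [Finset.mul_sum]
      apply Finset.sum_congr rfl
      intro b _
      ring
    have hQf_eq : (fun x => Q x * f x)
        = fun x => ∑ a, ∑ b, S⁻¹ a b * (x a * x b * f x) := by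
      funext x
      rw [hQ_eq x, Finset.sum_mul]
      apply Finset.sum_congr rfl
      intro a _
      rw [Finset.sum_mul]
      apply Finset.sum_congr rfl
      intro b _
      ring
    have hQf_int : Integrable (fun x => Q x * f x) := by
      rw [hQf_eq]
      apply integrable_finset_sum
      intro a _
      apply integrable_finset_sum
      intro b _
      exact (hcov_int a b).const_mul _
    have hQf_val : ∫ x, Q x * f x = (d:ℝ) := by
      rw [hQf_eq]
      rw [integral_finset_sum _ (fun a _ => (integrable_finset_sum _
        (fun b _ => (hcov_int a b).const_mul _) : Integrable (fun x => ∑ b, S⁻¹ a b * (x a * x b * f x))))]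
      have : ∀ a : Fin d, ∫ x, (∑ b, S⁻¹ a b * (x a * x b * f x))
          = ∑ b, S⁻¹ a b * S a b := by
        intro a
        rw [integral_finset_sum _ (fun b _ => (hcov_int a b).const_mul _)]
        apply Finset.sum_congr rfl
        intro b _
        rw [integral_const_mul, hcov]
      simp_rw [this]
      have hsymm : ∀ a b : Fin d, S a b = S b a := by
        intro a b
        rw [← hcov a b, ← hcov b a]
        congr 1
        funext x
        ring
      have htrace : ∑ a, ∑ b, S⁻¹ a b * S a b = ∑ a : Fin d, (S⁻¹ * S) a a := by
        apply Finset.sum_congr rfl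
        intro a _
        rw [Matrix.mul_apply]
        apply Finset.sum_congr rfl
        intro b _
        rw [hsymm a b]
      rw [htrace, Matrix.nonsing_inv_mul S (isUnit_iff_ne_zero.mpr hdetS.ne')]
      simp [Matrix.one_apply_eq]
    have hCQf_eq : (fun x => (c₀ - Q x) * f x) = fun x => c₀ * f x - Q x * f x :=
      funext fun x => by ring
    have hCQf_int : Integrable (fun x => (c₀ - Q x) * f x) := by
      rw [hCQf_eq]
      exact (hfi.const_mul c₀).sub hQf_int
    have h_mom : ∫ x, (c₀ - Q x) * f x = c₀ - (d:ℝ) := by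
      rw [hCQf_eq, integral_sub (hfi.const_mul c₀) hQf_int, integral_const_mul, hf1, hQf_val]
      ring
    -- lower bound on ∫ g f
    have hgf_lb : β * (c₀ - (d:ℝ)) ≤ ∫ x, g x * f x := by
      have hpt : ∀ x, β * ((c₀ - Q x) * f x) ≤ g x * f x := by
        intro x
        rw [hg_def]
        simp only
        rw [← mul_assoc]
        apply mul_le_mul_of_nonneg_right _ (hf0 x)
        exact mul_le_mul_of_nonneg_left (le_max_left _ _) hβ.le
      have := integral_mono (hCQf_int.const_mul β) hgf_int hpt
      rw [integral_const_mul, h_mom] at this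
      exact this
    -- main convexity step
    have hmain : (1-α) * K + α * ∫ x, g x * f x ≤ ∫ x, f x ^ α := by
      have hpt : ∀ x, (1-α) * (g x) ^ (p+1) + α * (g x * f x) ≤ (f x) ^ α :=
        fun x => renyi_aux_tangent hα hp_def (hf0 x) (hg0 x)
      have hsum : Integrable ((fun x => (1-α) * (g x) ^ (p+1))
          + fun x => α * (g x * f x)) := (hgp_int.const_mul (1-α)).add (hgf_int.const_mul α)
      have := integral_mono hsum hfα (fun x => by simpa using hpt x)
      simp only [Pi.add_apply] at this
      rw [integral_add (hgp_int.const_mul (1-α)) (hgf_int.const_mul α),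
        integral_const_mul, integral_const_mul, hKval] at this
      exact this
    have hfin : K ≤ ∫ x, f x ^ α := by
      have h1 : (1-α) * K + α * (β * (c₀ - (d:ℝ))) ≤ (1-α) * K + α * ∫ x, g x * f x := by
        have := mul_le_mul_of_nonneg_left hgf_lb hα0.le
        linarith
      have h2 : (1-α) * K + α * (β * (c₀ - (d:ℝ))) = K := by
        have hαval : α = (p+1)/p := by
          rw [hp_def]; field_simp; ring
        rw [hK_def, hc₀_def, hd2, hαval]
        field_simp
        ring
      linarith [hmain]
    have hLpos : 0 < ∫ x, f x ^ α := lt_of_lt_of_le hK hfin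
    have hlog : Real.log K ≤ Real.log (∫ x, f x ^ α) :=
      (Real.log_le_log_iff hK hLpos).mpr hfin
    have hneg : 1/(1-α) ≤ 0 := by
      apply div_nonpos_of_nonneg_of_nonpos zero_le_one
      linarith
    have hmono : (1/(1-α)) * Real.log (∫ x, f x ^ α) ≤ (1/(1-α)) * Real.log K :=
      mul_le_mul_of_nonpos_left hlog hneg
    refine le_trans hmono (le_of_eq ?_)
    -- compute (1/(1-α)) * log K = RHS
    have h1α : 1/(1-α) = -p := by
      rw [hp_def]
      field_simp
      rw [div_eq_iff (by linarith : (1:ℝ)-α ≠ 0)]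
      ring
    -- simplify the RHS constants
    have hαval : α = (p+1)/p := by rw [hp_def]; field_simp; ring
    have e1 : π * (α * ((d:ℝ) + 2) - d) / (α - 1) = 2*π*(p+1+m) := by
      rw [hαval, hd2]
      field_simp
      ring
    have e2 : (α * ((d:ℝ) + 2) - d) / (2 * α) = (p+1+m)/(p+1) := by
      rw [hαval, hd2]
      rw [div_eq_div_iff (by positivity) (by positivity)]
      field_simp
      ring
    have e3 : α / (α - 1) = p + 1 := by
      rw [hαval, hp_def]
      field_simp
      rw [show (1:ℝ) + (α - 1) - 1 = α - 1 by ring]; exact div_self hα1.ne'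
    have e4 : (α * ((d:ℝ) + 2) - d) / (2 * (α - 1)) = p+1+m := by
      rw [hαval, hd2, hp_def]
      field_simp
      field_simp [hα1.ne']
      ring
    have e6 : 1/(α-1) = p := by rw [hp_def]; field_simp
    rw [h1α, e1, e2, e3, e4, e6]
    -- expand the logs
    have hlogK : Real.log K = Real.log 2 + Real.log (p+1) + Real.log β := by
      rw [hK_def, Real.log_mul (by positivity) hβ.ne', Real.log_mul (by norm_num)
        (by positivity)]
    have hlogβ : Real.log β = p⁻¹ * (Real.log 2 + Real.log (p+1) - Real.log E) := by
      rw [hβ_def, Real.log_rpow hbase, Real.log_div (by positivity) hE.ne',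
        Real.log_mul (by norm_num) (by positivity)]
    have hlogE : Real.log E = (p+1+m) * (Real.log 2 + Real.log (p+1+m))
        + (Real.log S.det / 2 + m * Real.log π
          + (Real.log (p+1) + Real.log (Real.Gamma (p+1)))
          - (Real.log (p+1+m) + Real.log (Real.Gamma (p+1+m)))) := by
      have hπm : (0:ℝ) < π ^ m := Real.rpow_pos_of_pos pi_pos m
      have hc₀pow : Real.log (c₀ ^ (p+1+m)) = (p+1+m) * (Real.log 2 + Real.log (p+1+m)) := by
        rw [Real.log_rpow hc₀, hc₀_def, Real.log_mul two_ne_zero (by positivity)]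
      have hΓa : Real.Gamma (p+1+1) = (p+1) * Real.Gamma (p+1) := by
        rw [show p+1+1 = (p+1)+1 by ring, Real.Gamma_add_one (by positivity : (p+1:ℝ) ≠ 0)]
      have hΓb : Real.Gamma (p+1+1+m) = (p+1+m) * Real.Gamma (p+1+m) := by
        rw [show p+1+1+m = (p+1+m)+1 by ring,
          Real.Gamma_add_one (by positivity : (p+1+m:ℝ) ≠ 0)]
      have hx1 : (0:ℝ) < c₀ ^ (p+1+m) * Real.sqrt S.det :=
        mul_pos (Real.rpow_pos_of_pos hc₀ _) hsd
      have hx2 : (0:ℝ) < π ^ m * Real.Gamma (p+1+1) / Real.Gamma (p+1+1+m) :=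
        div_pos (mul_pos hπm hΓ1') hΓ2'
      rw [hE_def, Real.log_mul hx1.ne' hx2.ne',
        Real.log_mul (Real.rpow_pos_of_pos hc₀ _).ne' hsd.ne', hc₀pow,
        Real.log_sqrt hdetS.le,
        Real.log_div (mul_pos hπm hΓ1').ne' hΓ2'.ne',
        Real.log_mul hπm.ne' hΓ1'.ne', Real.log_rpow pi_pos, hΓa, hΓb,
        Real.log_mul (by positivity : (p+1:ℝ) ≠ 0) hΓ1.ne',
        Real.log_mul (by positivity : (p+1+m:ℝ) ≠ 0) hΓ2.ne']
      ring
    have r1 : Real.log (2*π*(p+1+m)) = Real.log 2 + Real.log π + Real.log (p+1+m) := by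
      rw [Real.log_mul (by positivity) (by positivity), Real.log_mul two_ne_zero pi_ne_zero]
    have r2 : Real.log ((p+1+m)/(p+1)) = Real.log (p+1+m) - Real.log (p+1) :=
      Real.log_div (by positivity) (by positivity)
    have r3 : Real.log (Real.Gamma (p+1) / Real.Gamma (p+1+m))
        = Real.log (Real.Gamma (p+1)) - Real.log (Real.Gamma (p+1+m)) :=
      Real.log_div hΓ1.ne' hΓ2.ne'
    rw [hlogK, hlogβ, hlogE, r1, r2, r3]
    field_simp
    ring
end

section
/- Let A_1, …, A_p be d×d real matrices and let C be their dp×dp block companion matrix. Define Ψ : ℕ → (d×d real matrices) recursively by Ψ_0 = I_d and Ψ_j = ∑_{i=1}^{min(j,p)} A_i · Ψ_{j−i} for j ≥ 1. Then for every j ∈ ℕ, the top-left d×d block of C^j (the block in position (1,1) of the p×p block decomposition) equals Ψ_j. -/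
open Matrix

/-- The `dp × dp` block companion matrix of the `d × d` real matrices `A 1, …, A p`:
viewed as a `p × p` array of `d × d` blocks, the `(1, i)` block is `A i`, the `(i+1, i)`
block is the identity for `i = 1, …, p−1`, and all other blocks vanish. -/
def blockCompanion (d p : ℕ) (A : ℕ → Matrix (Fin d) (Fin d) ℝ) :
    Matrix (Fin p × Fin d) (Fin p × Fin d) ℝ := fun x y =>
  if (x.1 : ℕ) = 0 then A ((y.1 : ℕ) + 1) x.2 y.2
  else if (x.1 : ℕ) = (y.1 : ℕ) + 1 then (if x.2 = y.2 then 1 else 0) else 0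

theorem blockCompanion_aux
    (d p : ℕ) (hp : 0 < p) (A : ℕ → Matrix (Fin d) (Fin d) ℝ)
    (Ψ : ℕ → Matrix (Fin d) (Fin d) ℝ)
    (hΨ0 : Ψ 0 = 1)
    (hΨ : ∀ j, 1 ≤ j → Ψ j = ∑ i ∈ Finset.Icc 1 (min j p), A i * Ψ (j - i)) :
    ∀ (j : ℕ) (k : Fin p) (a b : Fin d),
      (blockCompanion d p A ^ j) (k, a) (⟨0, hp⟩, b) =
        if (k : ℕ) ≤ j then Ψ (j - (k : ℕ)) a b else 0 := by
  intro j
  induction j with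
  | zero =>
    intro k a b
    rw [pow_zero, Matrix.one_apply]
    by_cases hk : k = ⟨0, hp⟩
    · subst hk
      simp [Prod.ext_iff, hΨ0, Matrix.one_apply]
    · have h0 : (k : ℕ) ≠ 0 := fun h => hk (Fin.ext h)
      simp [Prod.ext_iff, hk, h0]
  | succ j ih =>
    intro k a b
    rw [pow_succ', Matrix.mul_apply]
    by_cases hk : (k : ℕ) = 0
    · -- first block row
      have hsum : ∀ x : Fin p × Fin d,
          blockCompanion d p A (k, a) x * (blockCompanion d p A ^ j) x (⟨0, hp⟩, b)
            = A ((x.1 : ℕ) + 1) a x.2 *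
              (if (x.1 : ℕ) ≤ j then Ψ (j - (x.1 : ℕ)) x.2 b else 0) := by
        intro ⟨i, c⟩
        simp [blockCompanion, hk, ih]
      simp only [hsum]
      rw [Fintype.sum_prod_type]
      have hinner : ∀ i : Fin p,
          (∑ c : Fin d, A ((i : ℕ) + 1) a c *
              (if (i : ℕ) ≤ j then Ψ (j - (i : ℕ)) c b else 0))
            = if (i : ℕ) ≤ j then (A ((i : ℕ) + 1) * Ψ (j - (i : ℕ))) a b else 0 := by
        intro i
        by_cases hij : (i : ℕ) ≤ j
        · simp [hij, Matrix.mul_apply]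
        · simp [hij]
      simp only [hinner]
      have hk' : (k : ℕ) ≤ j + 1 := by omega
      rw [if_pos hk', hk, Nat.sub_zero, hΨ (j + 1) (by omega), Matrix.sum_apply]
      rw [Fin.sum_univ_eq_sum_range
        (fun i => if i ≤ j then (A (i + 1) * Ψ (j - i)) a b else 0) p]
      rw [← Finset.sum_filter]
      have hset : (Finset.range p).filter (· ≤ j) = Finset.range (min (j + 1) p) := by
        ext x
        simp only [Finset.mem_filter, Finset.mem_range]
        omega
      rw [hset]
      refine Finset.sum_nbij' (fun i => i + 1) (fun c => c - 1) ?_ ?_ ?_ ?_ ?_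
      · intro x hx; simp only [Finset.mem_range] at hx; simp only [Finset.mem_Icc]; omega
      · intro x hx; simp only [Finset.mem_Icc] at hx; simp only [Finset.mem_range]; omega
      · intro x hx; show x + 1 - 1 = x; omega
      · intro x hx; simp only [Finset.mem_Icc] at hx; show x - 1 + 1 = x; omega
      · intro x hx
        simp only [Finset.mem_range] at hx
        have h1 : j + 1 - (x + 1) = j - x := by omega
        rw [h1]
    · -- subdiagonal block row: k = k' + 1
      have hkp : (k : ℕ) - 1 < p := by omega
      set k' : Fin p := ⟨(k : ℕ) - 1, hkp⟩ with hk'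
      have hkk : (k : ℕ) = (k' : ℕ) + 1 := by simp [hk']; omega
      rw [Finset.sum_eq_single (k', a)]
      · have hC : blockCompanion d p A (k, a) (k', a) = 1 := by
          show (if (k : ℕ) = 0 then _ else if (k : ℕ) = (k' : ℕ) + 1 then (if a = a then (1:ℝ) else 0) else 0) = 1
          rw [if_neg hk, if_pos hkk, if_pos rfl]
        rw [hC, one_mul, ih]
        by_cases hkj : (k : ℕ) ≤ j + 1
        · have h1 : (k' : ℕ) ≤ j := by omega
          have h2 : j - (k' : ℕ) = j + 1 - (k : ℕ) := by omega
          rw [if_pos h1, if_pos hkj, h2]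
        · have h1 : ¬ (k' : ℕ) ≤ j := by omega
          rw [if_neg h1, if_neg hkj]
      · intro x _ hx
        obtain ⟨i, c⟩ := x
        have : blockCompanion d p A (k, a) (i, c) = 0 := by
          show (if (k : ℕ) = 0 then _ else if (k : ℕ) = (i : ℕ) + 1 then (if a = c then (1:ℝ) else 0) else 0) = 0
          rw [if_neg hk]
          by_cases hi : (k : ℕ) = (i : ℕ) + 1
          · have hik : i = k' := by apply Fin.ext; simp [hk']; omega
            subst hik
            have hca : ¬ a = c := by
              intro h; subst h; exact hx rfl
            rw [if_pos hi, if_neg hca]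
          · rw [if_neg hi]
        rw [this, zero_mul]
      · intro h
        exact absurd (Finset.mem_univ (k', a)) h

/-- **Powers of the block companion matrix.**
Let `C` be the block companion matrix of `A_1, …, A_p` and `Ψ : ℕ → R^{d×d}` be defined by
`Ψ_0 = I` and `Ψ_j = ∑_{i=1}^{min(j,p)} A_i Ψ_{j−i}` for `j ≥ 1`. Then the top-left `d × d`
block of `C^j` equals `Ψ_j` for every `j`. -/
theorem blockCompanion_pow_topLeft_block
    (d p : ℕ) (hp : 0 < p) (A : ℕ → Matrix (Fin d) (Fin d) ℝ)
    (Ψ : ℕ → Matrix (Fin d) (Fin d) ℝ)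
    (hΨ0 : Ψ 0 = 1)
    (hΨ : ∀ j, 1 ≤ j → Ψ j = ∑ i ∈ Finset.Icc 1 (min j p), A i * Ψ (j - i)) :
    ∀ (j : ℕ) (a b : Fin d),
      (blockCompanion d p A ^ j) (⟨0, hp⟩, a) (⟨0, hp⟩, b) = Ψ j a b := by
  intro j a b
  have := blockCompanion_aux d p hp A Ψ hΨ0 hΨ j ⟨0, hp⟩ a b
  simpa using this
end

section
/- Let (Ω, P) be a probability space, let d, p, r, q ∈ ℕ, let A_1, …, A_p, B_0, …, B_r, D_0, …, D_q be d×d real matrices, and let (u_t)_{t∈ℤ} and (w_t)_{t∈ℤ} be families of square-integrable random vectors Ω → ℝ^d with mean zero such that the combined family {u_t : t ∈ ℤ} ∪ {w_t : t ∈ ℤ} is mutually independent. Define x : ℤ → Ω → ℝ^d by x(t) = 0 for t ≤ 0 and, for t ≥ 1, x(t) = ∑_{i=1}^{p} A_i · x(t−i) + ∑_{j=0}^{r} B_j · u(t−j) + ∑_{k=0}^{q} D_k · w(t−k). Then for every integer τ > max(r, q) and every t ∈ ℤ, the autocovariance matrices satisfy E[x(t) · x(t−τ)ᵀ] = ∑_{i=1}^{p}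 A_i · E[x(t−i) · x(t−τ)ᵀ]. -/
/-!
The moving-average part of `x t` involves only noise at times in `[t - max r q, t]`, while
`x (t - τ)` is, by induction along the recursion, measurable with respect to the noise up to
time `t - τ`. For `τ > max r q` these two σ-algebras are generated by disjoint subfamilies of an
independent family, so the centred moving-average part is uncorrelated with `x (t - τ)`, and
expanding `x t` by the recursion leaves only the autoregressive terms.
-/

open MeasureTheory Matrix ProbabilityTheory Finset

section General

variable {Ω : Type*} {mΩ : MeasurableSpace Ω} {μ : Measure Ω}

theorem Matrix.measurable_mulVec {m n R : Type*} [Fintype m] [Fintype n] [TopologicalSpace R]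
    [MeasurableSpace R] [BorelSpace R] [SecondCountableTopology R]
    [NonUnitalNonAssocSemiring R] [ContinuousAdd R] [ContinuousMul R] (A : Matrix m n R) :
    Measurable (A *ᵥ ·) :=
  (continuous_const.matrix_mulVec continuous_id).measurable

theorem MeasureTheory.MemLp.matrix_mulVec {𝕜 m n : Type*} [NontriviallyNormedField 𝕜]
    [CompleteSpace 𝕜] [Fintype m] [Fintype n] (A : Matrix m n 𝕜) {f : Ω → n → 𝕜}
    {p : ENNReal} (hf : MemLp f p μ) : MemLp (fun ω => A *ᵥ f ω) p μ :=
  (LinearMap.toContinuousLinearMap A.mulVecLin).comp_memLp' hf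

theorem MeasureTheory.Integrable.matrix_mulVec {𝕜 m n : Type*} [NontriviallyNormedField 𝕜]
    [CompleteSpace 𝕜] [Fintype m] [Fintype n] (A : Matrix m n 𝕜) {f : Ω → n → 𝕜}
    (hf : Integrable f μ) : Integrable (fun ω => A *ᵥ f ω) μ :=
  (LinearMap.toContinuousLinearMap A.mulVecLin).integrable_comp hf

theorem MeasureTheory.integral_matrix_mulVec {𝕜 m n : Type*} [RCLike 𝕜] [Fintype m]
    [Fintype n] (A : Matrix m n 𝕜) {f : Ω → n → 𝕜} (hf : Integrable f μ) :
    ∫ ω, A *ᵥ f ω ∂μ = A *ᵥ ∫ ω, f ω ∂μ :=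
  (LinearMap.toContinuousLinearMap A.mulVecLin).integral_comp_comm hf

theorem ProbabilityTheory.iIndepFun.indep_biSup_comap_of_disjoint {ι β : Type*}
    [MeasurableSpace β] {f : ι → Ω → β} (hf : iIndepFun f μ) (hmeas : ∀ i, Measurable (f i))
    {S T : Set ι} (hST : Disjoint S T) :
    Indep (⨆ i ∈ S, MeasurableSpace.comap (f i) ‹_›)
      (⨆ i ∈ T, MeasurableSpace.comap (f i) ‹_›) μ :=
  indep_iSup_of_disjoint (fun i => (hmeas i).comap_le) hf.iIndep hST

theorem ProbabilityTheory.Indep.integral_mul_eq_zero {m₁ m₂ : MeasurableSpace Ω}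
    (h : Indep m₁ m₂ μ) (hm₁ : m₁ ≤ mΩ) (hm₂ : m₂ ≤ mΩ) {X Y : Ω → ℝ}
    (hX : Measurable[m₁] X) (hY : Measurable[m₂] Y) (hX0 : ∫ ω, X ω ∂μ = 0) :
    ∫ ω, X ω * Y ω ∂μ = 0 := by
  have hXY : IndepFun X Y μ := by
    rw [IndepFun_iff_Indep]
    exact indep_of_indep_of_le_right (indep_of_indep_of_le_left h hX.comap_le) hY.comap_le
  rw [hXY.integral_fun_mul_eq_mul_integral (hX.mono hm₁ le_rfl).aestronglyMeasurable
    (hY.mono hm₂ le_rfl).aestronglyMeasurable, hX0, zero_mul]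

end General

section Noise

variable {Ω β : Type*} {mΩ : MeasurableSpace Ω} {μ : Measure Ω} [MeasurableSpace β]
  {u w : ℤ → Ω → β}

/-- An index of the combined family `Sum.elim u w` has time `Sum.elim id id`. -/
abbrev noiseSigma (u w : ℤ → Ω → β) (T : Set ℤ) : MeasurableSpace Ω :=
  ⨆ i ∈ Sum.elim id id ⁻¹' T, MeasurableSpace.comap (Sum.elim u w i) ‹_›

theorem noiseSigma_mono {T T' : Set ℤ} (h : T ⊆ T') : noiseSigma u w T ≤ noiseSigma u w T' :=
  biSup_mono fun _ hi => h hi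

theorem measurable_noiseSigma_left {T : Set ℤ} {t : ℤ} (ht : t ∈ T) :
    Measurable[noiseSigma u w T] (u t) :=
  measurable_iff_comap_le.mpr (le_biSup (fun i => MeasurableSpace.comap (Sum.elim u w i) ‹_›)
    (i := Sum.inl t) ht)

theorem measurable_noiseSigma_right {T : Set ℤ} {t : ℤ} (ht : t ∈ T) :
    Measurable[noiseSigma u w T] (w t) :=
  measurable_iff_comap_le.mpr (le_biSup (fun i => MeasurableSpace.comap (Sum.elim u w i) ‹_›)
    (i := Sum.inr t) ht)

theorem noiseSigma_le (hu : ∀ t, Measurable (u t)) (hw : ∀ t, Measurable (w t)) (T : Set ℤ) :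
    noiseSigma u w T ≤ mΩ :=
  iSup₂_le fun i _ => Sum.rec (fun t => (hu t).comap_le) (fun t => (hw t).comap_le) i

theorem indep_noiseSigma_of_disjoint (hindep : iIndepFun (Sum.elim u w) μ)
    (hu : ∀ t, Measurable (u t)) (hw : ∀ t, Measurable (w t)) {T T' : Set ℤ}
    (hTT' : Disjoint T T') : Indep (noiseSigma u w T) (noiseSigma u w T') μ :=
  hindep.indep_biSup_comap_of_disjoint (Sum.rec hu hw) (hTT'.preimage _)

end Noise

section Arma

variable {Ω : Type*} {mΩ : MeasurableSpace Ω} {μ : Measure Ω} {d : ℕ}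

def movingAverage (r q : ℕ) (B D : ℕ → Matrix (Fin d) (Fin d) ℝ) (u w : ℤ → Ω → Fin d → ℝ)
    (t : ℤ) (ω : Ω) : Fin d → ℝ :=
  ∑ j ∈ range (r + 1), B j *ᵥ u (t - j) ω + ∑ k ∈ range (q + 1), D k *ᵥ w (t - k) ω

variable {r q : ℕ} {B D : ℕ → Matrix (Fin d) (Fin d) ℝ} {u w : ℤ → Ω → Fin d → ℝ}

theorem measurable_movingAverage {T : Set ℤ} {t : ℤ} (hT : Set.Icc (t - max r q) t ⊆ T) :
    Measurable[noiseSigma u w T] (movingAverage r q B D u w t) := by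
  refine (Finset.measurable_sum _ fun j hj => ?_).add (Finset.measurable_sum _ fun k hk => ?_)
  · refine (B j).measurable_mulVec.comp (measurable_noiseSigma_left (hT ?_))
    have := mem_range.mp hj
    constructor <;> omega
  · refine (D k).measurable_mulVec.comp (measurable_noiseSigma_right (hT ?_))
    have := mem_range.mp hk
    constructor <;> omega

theorem memLp_movingAverage {p : ENNReal} (hu : ∀ t, MemLp (u t) p μ)
    (hw : ∀ t, MemLp (w t) p μ) (t : ℤ) : MemLp (movingAverage r q B D u w t) p μ :=
  (memLp_finsetSum _ fun j _ => (hu _).matrix_mulVec (B j)).add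
    (memLp_finsetSum _ fun k _ => (hw _).matrix_mulVec (D k))

theorem integral_movingAverage (hu : ∀ t, Integrable (u t) μ) (hw : ∀ t, Integrable (w t) μ)
    (hu0 : ∀ t, ∫ ω, u t ω ∂μ = 0) (hw0 : ∀ t, ∫ ω, w t ω ∂μ = 0) (t : ℤ) :
    ∫ ω, movingAverage r q B D u w t ω ∂μ = 0 := by
  have hBu : ∀ j, Integrable (fun ω => B j *ᵥ u (t - j) ω) μ := fun j => (hu _).matrix_mulVec _
  have hDw : ∀ k, Integrable (fun ω => D k *ᵥ w (t - k) ω) μ := fun k => (hw _).matrix_mulVec _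
  unfold movingAverage
  rw [integral_add (integrable_finsetSum _ fun j _ => hBu j)
    (integrable_finsetSum _ fun k _ => hDw k), integral_finsetSum _ fun j _ => hBu j,
    integral_finsetSum _ fun k _ => hDw k]
  simp [integral_matrix_mulVec, hu, hw, hu0, hw0]

theorem integral_movingAverage_apply_mul_eq_zero (hindep : iIndepFun (Sum.elim u w) μ)
    (humeas : ∀ t, Measurable (u t)) (hwmeas : ∀ t, Measurable (w t))
    (hu : ∀ t, Integrable (u t) μ) (hw : ∀ t, Integrable (w t) μ)
    (hu0 : ∀ t, ∫ ω, u t ω ∂μ = 0) (hw0 : ∀ t, ∫ ω, w t ω ∂μ = 0) {s t : ℤ}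
    (hst : s < t - max r q) {Y : Ω → ℝ} (hY : Measurable[noiseSigma u w (Set.Iic s)] Y)
    (a : Fin d) : ∫ ω, movingAverage r q B D u w t ω a * Y ω ∂μ = 0 := by
  have hindep_past : Indep (noiseSigma u w (Set.Ioi s)) (noiseSigma u w (Set.Iic s)) μ :=
    indep_noiseSigma_of_disjoint hindep humeas hwmeas (Set.Iic_disjoint_Ioi le_rfl).symm
  have hmean : ∫ ω, movingAverage r q B D u w t ω a ∂μ = 0 := by
    have hint : Integrable (movingAverage r q B D u w t) μ := memLp_one_iff_integrable.1 <|
      memLp_movingAverage (fun t => memLp_one_iff_integrable.2 (hu t))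
        (fun t => memLp_one_iff_integrable.2 (hw t)) t
    rw [← eval_integral (fun c => hint.eval c), integral_movingAverage hu hw hu0 hw0,
      Pi.zero_apply]
  refine hindep_past.integral_mul_eq_zero (noiseSigma_le humeas hwmeas _)
    (noiseSigma_le humeas hwmeas _) ((measurable_pi_apply a).comp (measurable_movingAverage ?_))
    hY hmean
  intro i hi
  simp only [Set.mem_Icc, Set.mem_Ioi] at hi ⊢
  omega

variable {p : ℕ} {A : ℕ → Matrix (Fin d) (Fin d) ℝ} {x ν : ℤ → Ω → Fin d → ℝ}

theorem measurable_of_ar_recursion {ℱ : ℤ → MeasurableSpace Ω} (hℱ : Monotone ℱ)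
    (hν : ∀ t, Measurable[ℱ t] (ν t)) (hx0 : ∀ t ≤ 0, x t = 0)
    (hx : ∀ t, 1 ≤ t → ∀ ω, x t ω = ∑ i ∈ Icc 1 p, A i *ᵥ x (t - i) ω + ν t ω) (t : ℤ) :
    Measurable[ℱ t] (x t) := by
  induction t using Int.strongRec (m := 1) with
  | lt t ht => rw [hx0 t (by omega)]; exact measurable_const
  | ge t ht ih =>
    rw [funext (hx t ht)]
    refine (Finset.measurable_sum _ fun i hi => ?_).add (hν t)
    have := (mem_Icc.mp hi).1
    exact (A i).measurable_mulVec.comp ((ih (t - i) (by omega)).mono (hℱ (by omega)) le_rfl)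

theorem memLp_of_ar_recursion {p' : ENNReal} (hν : ∀ t, MemLp (ν t) p' μ)
    (hx0 : ∀ t ≤ 0, x t = 0)
    (hx : ∀ t, 1 ≤ t → ∀ ω, x t ω = ∑ i ∈ Icc 1 p, A i *ᵥ x (t - i) ω + ν t ω) (t : ℤ) :
    MemLp (x t) p' μ := by
  induction t using Int.strongRec (m := 1) with
  | lt t ht => rw [hx0 t (by omega)]; exact MemLp.zero
  | ge t ht ih =>
    rw [funext (hx t ht)]
    refine (memLp_finsetSum _ fun i hi => ?_).add (hν t)
    have := (mem_Icc.mp hi).1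
    exact (ih (t - i) (by omega)).matrix_mulVec _

theorem integral_apply_mul_of_ar_recursion {t : ℤ} (hx2 : ∀ s, MemLp (x s) 2 μ)
    (hν2 : MemLp (ν t) 2 μ) (hrec : ∀ ω, x t ω = ∑ i ∈ Icc 1 p, A i *ᵥ x (t - i) ω + ν t ω)
    {Y : Ω → ℝ} (hY : MemLp Y 2 μ) (a : Fin d) :
    ∫ ω, x t ω a * Y ω ∂μ =
      ∑ i ∈ Icc 1 p, ∑ c, A i a c * ∫ ω, x (t - i) ω c * Y ω ∂μ + ∫ ω, ν t ω a * Y ω ∂μ := by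
  have hAxY : ∀ i c, Integrable (fun ω => A i a c * (x (t - i) ω c * Y ω)) μ := fun i c =>
    (((hx2 _).eval c).integrable_mul hY).const_mul _
  have hνY : Integrable (fun ω => ν t ω a * Y ω) μ := (hν2.eval a).integrable_mul hY
  simp_rw [hrec, Pi.add_apply, Finset.sum_apply, mulVec, dotProduct, add_mul, Finset.sum_mul,
    mul_assoc]
  rw [integral_add (integrable_finsetSum _ fun i _ => integrable_finsetSum _ fun c _ => hAxY i c)
    hνY, integral_finsetSum _ fun i _ => integrable_finsetSum _ fun c _ => hAxY i c]
  simp_rw [integral_finsetSum _ fun c _ => hAxY _ c, integral_const_mul]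

end Arma

/-- **Yule–Walker-type recursion for the autocovariances of a multivariate ARMA control
process.** Let `x(t) = ∑_{i=1}^p A_i x(t−i) + ∑_{j=0}^r B_j u(t−j) + ∑_{k=0}^q D_k w(t−k)`
for `t ≥ 1`, with `x(t) = 0` for `t ≤ 0`, where the combined family of the square-integrable
zero-mean processes `u` and `w` is mutually independent. Then for every integer
`τ > max(r, q)` and every `t`, `E[x(t)·x(t−τ)ᵀ] = ∑_{i=1}^p A_i · E[x(t−i)·x(t−τ)ᵀ]`,
entrywise. -/
theorem arma_autocovariance_recursion
    (d p r q : ℕ) {Ω : Type*} [MeasurableSpace Ω] (P : Measure Ω) [IsProbabilityMeasure P]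
    (A B D : ℕ → Matrix (Fin d) (Fin d) ℝ)
    (u w : ℤ → Ω → (Fin d → ℝ))
    (humeas : ∀ t, Measurable (u t)) (hwmeas : ∀ t, Measurable (w t))
    (hu2 : ∀ t (a : Fin d), MemLp (fun ω => u t ω a) 2 P)
    (hw2 : ∀ t (a : Fin d), MemLp (fun ω => w t ω a) 2 P)
    (humean : ∀ t (a : Fin d), ∫ ω, u t ω a ∂P = 0)
    (hwmean : ∀ t (a : Fin d), ∫ ω, w t ω a ∂P = 0)
    (hindep : iIndepFun (Sum.elim u w) P)
    (x : ℤ → Ω → (Fin d → ℝ))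
    (hx0 : ∀ t : ℤ, t ≤ 0 → x t = 0)
    (hxrec : ∀ t : ℤ, 1 ≤ t → ∀ ω,
      x t ω = (∑ i ∈ Finset.Icc 1 p, (A i).mulVec (x (t - (i : ℤ)) ω))
        + (∑ j ∈ Finset.range (r + 1), (B j).mulVec (u (t - (j : ℤ)) ω))
        + (∑ k ∈ Finset.range (q + 1), (D k).mulVec (w (t - (k : ℤ)) ω))) :
    ∀ τ : ℤ, (max r q : ℤ) < τ → ∀ t : ℤ, ∀ a b : Fin d,
      ∫ ω, x t ω a * x (t - τ) ω b ∂P =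
        ∑ i ∈ Finset.Icc 1 p, ∑ c : Fin d,
          A i a c * ∫ ω, x (t - (i : ℤ)) ω c * x (t - τ) ω b ∂P := by
  intro τ hτ t a b
  have hu : ∀ t, MemLp (u t) 2 P := fun t => MemLp.of_eval (hu2 t)
  have hw : ∀ t, MemLp (w t) 2 P := fun t => MemLp.of_eval (hw2 t)
  have hu0 : ∀ t, ∫ ω, u t ω ∂P = 0 := fun t => funext fun a =>
    (eval_integral (fun c => (hu2 t c).integrable one_le_two) a).trans (humean t a)
  have hw0 : ∀ t, ∫ ω, w t ω ∂P = 0 := fun t => funext fun a =>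
    (eval_integral (fun c => (hw2 t c).integrable one_le_two) a).trans (hwmean t a)
  have hrec : ∀ t, 1 ≤ t → ∀ ω,
      x t ω = ∑ i ∈ Icc 1 p, A i *ᵥ x (t - i) ω + movingAverage r q B D u w t ω :=
    fun t ht ω => by rw [hxrec t ht ω, add_assoc, movingAverage]
  have hx2 : ∀ s, MemLp (x s) 2 P := memLp_of_ar_recursion (memLp_movingAverage hu hw) hx0 hrec
  have hxadapted : ∀ s, Measurable[noiseSigma u w (Set.Iic s)] (x s) :=
    measurable_of_ar_recursion (fun _ _ hst => noiseSigma_mono (Set.Iic_subset_Iic.2 hst))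
      (fun t => measurable_movingAverage Set.Icc_subset_Iic_self) hx0 hrec
  rcases le_or_gt t 0 with ht | ht
  · have hxi : ∀ i ∈ Icc 1 p, x (t - i) = 0 := fun i hi =>
      hx0 _ (by have := (mem_Icc.mp hi).1; omega)
    simp +contextual [hx0 t ht, hxi]
  · have hpast : Measurable[noiseSigma u w (Set.Iic (t - τ))] fun ω => x (t - τ) ω b :=
      (measurable_pi_apply b).comp (hxadapted _)
    rw [integral_apply_mul_of_ar_recursion hx2 (memLp_movingAverage hu hw t) (hrec t ht)
        ((hx2 _).eval b),
      integral_movingAverage_apply_mul_eq_zero hindep humeas hwmeas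
        (fun t => (hu t).integrable one_le_two) (fun t => (hw t).integrable one_le_two) hu0 hw0
        (by omega) hpast, add_zero]
end
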